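/- arXiv:2210.16533 — 7 statements merged into one kernel-verified Lean document; each statement's English description precedes it below -/
import Mathlib

section
/- Let n ≥ 1 and let W : M_n(ℝ) → ℝ be C¹ and satisfy W(XR) = W(X) for every R ∈ SO(n) and every X ∈ M_n(ℝ). Then the energy-momentum tensor is symmetric: T(X)ᵀ = T(X) for every X ∈ M_n(ℝ). -/
open MeasureTheory Matrix

section ExpAux

open NormedSpace

attribute [local instance] Matrix.linftyOpNormedRing Matrix.linftyOpNormedAlgebra

lemma aux_exp_entry_deriv {n : ℕ} (A : Matrix (Fin n) (Fin n) ℝ) (i j : Fin n) :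
    HasDerivAt (fun t : ℝ => exp (t • A) i j) (A i j) 0 := by
  have h := hasDerivAt_exp_smul_const (𝕂 := ℝ) A (0 : ℝ)
  rw [zero_smul, exp_zero, one_mul] at h
  let l : Matrix (Fin n) (Fin n) ℝ →ₗ[ℝ] ℝ :=
    { toFun := fun M => M i j, map_add' := fun _ _ => rfl, map_smul' := fun _ _ => rfl }
  exact (LinearMap.toContinuousLinearMap l).hasFDerivAt.comp_hasDerivAt 0 h

lemma aux_exp_orth {n : ℕ} (A : Matrix (Fin n) (Fin n) ℝ) (hA : Aᵀ = -A) (t : ℝ) :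
    (exp (t • A))ᵀ * exp (t • A) = 1 := by
  have h1 : (exp (t • A))ᵀ = exp (-(t • A)) := by
    rw [← Matrix.exp_transpose, Matrix.transpose_smul, hA, smul_neg]
  rw [h1, ← Matrix.exp_add_of_commute _ _ (Commute.refl (t • A)).neg_left,
    neg_add_cancel, exp_zero]

lemma aux_exp_det {n : ℕ} (A : Matrix (Fin n) (Fin n) ℝ) (hA : Aᵀ = -A) (t : ℝ) :
    (exp (t • A)).det = 1 := by
  have h2 : exp (t • A) = exp ((t / 2) • A) * exp ((t / 2) • A) := by
    rw [← Matrix.exp_add_of_commute _ _ (Commute.refl _), ← add_smul]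
    norm_num
  have hsq : (exp (t • A)).det ^ 2 = 1 := by
    have := congrArg Matrix.det (aux_exp_orth A hA t)
    rwa [Matrix.det_mul, Matrix.det_transpose, ← sq, Matrix.det_one] at this
  have hpos : 0 ≤ (exp (t • A)).det := by
    rw [h2, Matrix.det_mul]
    exact mul_self_nonneg _
  nlinarith [hsq, hpos]

end ExpAux

attribute [local instance] Matrix.normedAddCommGroup Matrix.normedSpace

noncomputable section

abbrev Mat (n : ℕ) : Type := Matrix (Fin n) (Fin n) ℝ

/-- Frobenius inner product `⟨A, B⟩ = tr(Aᵀ B)`. -/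
def frob {n : ℕ} (A B : Mat n) : ℝ := (Aᵀ * B).trace

/-- The orthogonal group `O(n)` as a subset of the `n × n` matrices. -/
def On (n : ℕ) : Set (Mat n) := {R : Mat n | Rᵀ * R = 1}

/-- A matrix regarded as a continuous linear map `ℝⁿ → ℝⁿ`. -/
noncomputable def matCLM {n : ℕ} (D : Mat n) : (Fin n → ℝ) →L[ℝ] (Fin n → ℝ) :=
  LinearMap.toContinuousLinearMap D.mulVecLin

/-- The Jacobian matrix of `f` at `x`. -/
noncomputable def jac {n : ℕ} (f : (Fin n → ℝ) → (Fin n → ℝ)) (x : Fin n → ℝ) : Mat n :=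
  Matrix.of fun i j => fderiv ℝ f x (Pi.single j 1) i

/-- Smooth compactly supported test vector fields supported in `Ω`. -/
def IsTestFun {n : ℕ} (Ω : Set (Fin n → ℝ)) (lam : (Fin n → ℝ) → (Fin n → ℝ)) : Prop :=
  ContDiff ℝ (⊤ : ℕ∞) lam ∧ HasCompactSupport lam ∧ tsupport lam ⊆ Ω

/-- The energy-momentum tensor `T(X) = Xᵀ ∇W(X) − W(X) I`. -/
noncomputable def EMT {n : ℕ} (W : Mat n → ℝ) (gradW : Mat n → Mat n) (X : Mat n) : Mat n :=
  Xᵀ * gradW X - W X • (1 : Mat n)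

lemma aux_curve_deriv {n : ℕ} (X A : Mat n) :
    HasDerivAt (fun t : ℝ => X * NormedSpace.exp (t • A)) (X * A) 0 := by
  apply hasDerivAt_pi.2
  intro i
  rw [hasDerivAt_pi]
  intro j
  have he : ∀ t : ℝ, (X * NormedSpace.exp (t • A)) i j
      = ∑ k, X i k * NormedSpace.exp (t • A) k j := by
    intro t; rw [Matrix.mul_apply]
  simp only [he]
  rw [show (X * A) i j = ∑ k, X i k * A k j from Matrix.mul_apply]
  exact HasDerivAt.fun_sum fun k _ => (aux_exp_entry_deriv A k j).const_mul (X i k)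

lemma aux_trace_std {n : ℕ} (M : Mat n) (i j : Fin n) :
    (M * Matrix.single i j 1).trace = M j i := by
  simp [Matrix.trace, Matrix.diag, Matrix.mul_apply, Matrix.single, ite_and,
    Finset.sum_ite_eq, Finset.sum_ite_eq']

/-- if `W` is `C¹` and right `SO(n)`-invariant, `W(XR) = W(X)` for all
`R ∈ SO(n)`, then the energy-momentum tensor is symmetric. -/
theorem stmt_5 (n : ℕ) (hn : 1 ≤ n) (W : Mat n → ℝ) (hW : ContDiff ℝ 1 W)
    (gradW : Mat n → Mat n)
    (hgrad : ∀ X H : Mat n, HasDerivAt (fun t : ℝ => W (X + t • H)) (frob (gradW X) H) 0)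
    (hSO : ∀ R : Mat n, Rᵀ * R = 1 → R.det = 1 → ∀ X : Mat n, W (X * R) = W X) :
    ∀ X : Mat n, (EMT W gradW X)ᵀ = EMT W gradW X := by
  intro X
  set G := gradW X with hG
  have hWd : HasFDerivAt W (fderiv ℝ W X) X :=
    ((hW.differentiable one_ne_zero) X).hasFDerivAt
  have hfrob : ∀ H : Mat n, fderiv ℝ W X H = frob G H := by
    intro H
    have hline : HasDerivAt (fun t : ℝ => X + t • H) H 0 := by
      have h1 : HasDerivAt (fun t : ℝ => t • H) ((1 : ℝ) • H) 0 :=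
        (hasDerivAt_id (0 : ℝ)).smul_const H
      exact (by simpa using h1 : HasDerivAt (fun t : ℝ => t • H) H 0).const_add X
    have hWd' : HasFDerivAt W (fderiv ℝ W X) (X + (0 : ℝ) • H) := by
      rw [show X + (0 : ℝ) • H = X by simp]
      exact hWd
    have h2 : HasDerivAt (fun t : ℝ => W (X + t • H)) (fderiv ℝ W X H) 0 :=
      hWd'.comp_hasDerivAt 0 hline
    exact h2.unique (hgrad X H)
  have key : ∀ A : Mat n, Aᵀ = -A → frob G (X * A) = 0 := by
    intro A hA
    have hc := aux_curve_deriv X A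
    have hWd' : HasFDerivAt W (fderiv ℝ W X) (X * NormedSpace.exp ((0 : ℝ) • A)) := by
      rw [show X * NormedSpace.exp ((0 : ℝ) • A) = X by
        rw [zero_smul, NormedSpace.exp_zero, mul_one]]
      exact hWd
    have h1 : HasDerivAt (fun t : ℝ => W (X * NormedSpace.exp (t • A)))
        (fderiv ℝ W X (X * A)) 0 := hWd'.comp_hasDerivAt 0 hc
    have hconst : (fun t : ℝ => W (X * NormedSpace.exp (t • A))) = fun _ => W X := by
      funext t
      exact hSO _ (aux_exp_orth A hA t) (aux_exp_det A hA t) X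
    rw [hconst] at h1
    have h0 := h1.unique (hasDerivAt_const 0 (W X))
    rw [← hfrob (X * A)]
    exact h0
  have hsym : Gᵀ * X = Xᵀ * G := by
    have hM : ∀ i j : Fin n, (Gᵀ * X) i j = (Gᵀ * X) j i := by
      intro i j
      have hA : (Matrix.single i j (1 : ℝ) - Matrix.single j i 1)ᵀ
          = -(Matrix.single i j (1 : ℝ) - Matrix.single j i 1) := by
        ext a b
        simp [Matrix.transpose_apply, Matrix.single, and_comm]
      have hk := key _ hA
      have : frob G (X * (Matrix.single i j (1 : ℝ) - Matrix.single j i 1))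
          = (Gᵀ * X) j i - (Gᵀ * X) i j := by
        rw [frob, Matrix.mul_sub, Matrix.mul_sub, ← Matrix.mul_assoc, ← Matrix.mul_assoc]
        rw [Matrix.trace_sub, aux_trace_std, aux_trace_std]
      rw [this] at hk
      linarith
    have hT : (Gᵀ * X)ᵀ = Gᵀ * X := by
      ext i j
      rw [Matrix.transpose_apply]
      exact hM j i
    calc Gᵀ * X = (Gᵀ * X)ᵀ := hT.symm
      _ = Xᵀ * Gᵀᵀ := Matrix.transpose_mul _ _
      _ = Xᵀ * G := by rw [Matrix.transpose_transpose]
  rw [EMT, Matrix.transpose_sub, Matrix.transpose_smul, Matrix.transpose_one,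
    Matrix.transpose_mul, Matrix.transpose_transpose, ← hG, hsym]
end
end

section
/- Let n ≥ 1, let W : M_n(ℝ) → ℝ be C¹ and frame indifferent, let A ∈ M_n(ℝ), and let Ω ⊆ ℝⁿ be open. Let u : Ω → ℝⁿ be a Lipschitz map with Du(x) ∈ O(n)·A = {RA : R ∈ O(n)} for almost every x ∈ Ω. Then T(Du(x)) = T(A) for almost every x ∈ Ω, and u is a weak solution of the energy-momentum equations on Ω, i.e. ∫_Ω ⟨T(Du(x)), Dλ(x)⟩ dx = 0 for every smooth compactly supported λ : Ω → ℝⁿ. -/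
open MeasureTheory Matrix

attribute [local instance] Matrix.normedAddCommGroup Matrix.normedSpace

noncomputable section

/- Auxiliary lemmas -/

lemma frob_sub_left {n : ℕ} (A B H : Mat n) : frob (A - B) H = frob A H - frob B H := by
  simp [frob, Matrix.transpose_sub, Matrix.sub_mul]

lemma frob_mul_left {n : ℕ} (R G H : Mat n) : frob (R * G) H = frob G (Rᵀ * H) := by
  simp [frob, Matrix.transpose_mul, Matrix.mul_assoc]

lemma frob_eq_sum {n : ℕ} (A B : Mat n) : frob A B = ∑ j, ∑ i, A i j * B i j := by
  simp [frob, Matrix.trace, Matrix.diag, Matrix.mul_apply, Matrix.transpose_apply]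

lemma eq_zero_of_frob_self {n : ℕ} (M : Mat n) (h : frob M M = 0) : M = 0 := by
  rw [frob_eq_sum] at h
  have hnn : ∀ j ∈ Finset.univ, (0:ℝ) ≤ ∑ i, M i j * M i j :=
    fun j _ => Finset.sum_nonneg fun i _ => mul_self_nonneg _
  have h1 := (Finset.sum_eq_zero_iff_of_nonneg hnn).mp h
  ext i j
  have h2 := (Finset.sum_eq_zero_iff_of_nonneg
    (fun i (_ : i ∈ Finset.univ) => mul_self_nonneg (M i j))).mp
      (h1 j (Finset.mem_univ j)) i (Finset.mem_univ i)
  have := mul_self_eq_zero.mp h2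
  simpa using this

lemma gradW_orth {n : ℕ} (W : Mat n → ℝ) (gradW : Mat n → Mat n)
    (hgrad : ∀ X H : Mat n, HasDerivAt (fun t : ℝ => W (X + t • H)) (frob (gradW X) H) 0)
    (hFI : ∀ R ∈ On n, ∀ X : Mat n, W (R * X) = W X)
    {R : Mat n} (hR : R ∈ On n) (X : Mat n) :
    gradW (R * X) = R * gradW X := by
  have hRRt : R * Rᵀ = 1 := mul_eq_one_comm.mp hR
  have key : ∀ H, frob (gradW (R * X)) H = frob (R * gradW X) H := by
    intro H
    have h1 := hgrad (R * X) H
    have h2 := hgrad X (Rᵀ * H)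
    have heq : (fun t : ℝ => W (X + t • (Rᵀ * H))) = fun t : ℝ => W (R * X + t • H) := by
      funext t
      rw [← hFI R hR (X + t • (Rᵀ * H))]
      congr 1
      rw [Matrix.mul_add, Matrix.mul_smul, ← Matrix.mul_assoc, hRRt, Matrix.one_mul]
    rw [heq] at h2
    rw [h1.unique h2, frob_mul_left]
  have hz : frob (gradW (R * X) - R * gradW X) (gradW (R * X) - R * gradW X) = 0 := by
    rw [frob_sub_left, key, sub_self]
  exact sub_eq_zero.mp (eq_zero_of_frob_self _ hz)

lemma EMT_orth {n : ℕ} (W : Mat n → ℝ) (gradW : Mat n → Mat n)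
    (hgrad : ∀ X H : Mat n, HasDerivAt (fun t : ℝ => W (X + t • H)) (frob (gradW X) H) 0)
    (hFI : ∀ R ∈ On n, ∀ X : Mat n, W (R * X) = W X)
    {R : Mat n} (hR : R ∈ On n) (A : Mat n) :
    EMT W gradW (R * A) = EMT W gradW A := by
  unfold EMT
  rw [gradW_orth W gradW hgrad hFI hR A, hFI R hR A]
  congr 1
  rw [Matrix.transpose_mul, Matrix.mul_assoc, ← Matrix.mul_assoc Rᵀ R, hR.out,
    Matrix.one_mul]

/-- The integral over the whole space of a partial derivative of a compactly supported
smooth function vanishes. -/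
lemma integral_fderiv_component {n : ℕ} {lam : (Fin n → ℝ) → (Fin n → ℝ)}
    (hsm : ContDiff ℝ (⊤ : ℕ∞) lam) (hcs : HasCompactSupport lam) (i j : Fin n) :
    ∫ x : Fin n → ℝ, fderiv ℝ lam x (Pi.single j 1) i = 0 := by
  set g : (Fin n → ℝ) → ℝ := fun x => lam x i with hg_def
  have hg_sm : ContDiff ℝ (⊤ : ℕ∞) g :=
    ((ContinuousLinearMap.proj (R := ℝ) (φ := fun _ : Fin n => ℝ) i).contDiff).comp hsm
  have hg_cs : HasCompactSupport g := hcs.comp_left (g := fun v : Fin n → ℝ => v i) rfl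
  have hg_diff : Differentiable ℝ g := hg_sm.differentiable (by simp)
  have hlam_diff : Differentiable ℝ lam := hsm.differentiable (by simp)
  have hfd : ∀ x, fderiv ℝ g x (Pi.single j 1) = fderiv ℝ lam x (Pi.single j 1) i := by
    intro x
    have h := ((ContinuousLinearMap.proj (R := ℝ) (φ := fun _ : Fin n => ℝ) i).hasFDerivAt).comp
      x (hlam_diff x).hasFDerivAt
    rw [show g = (⇑(ContinuousLinearMap.proj (R := ℝ) (φ := fun _ : Fin n => ℝ) i) ∘ lam)
      from rfl, h.fderiv]
    rfl
  have hderiv_cont : Continuous fun x => fderiv ℝ g x (Pi.single j 1) :=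
    (hg_sm.continuous_fderiv (by simp)).clm_apply continuous_const
  have hderiv_cs : HasCompactSupport fun x => fderiv ℝ g x (Pi.single j 1) :=
    (hg_cs.fderiv ℝ).comp_left (g := fun L : (Fin n → ℝ) →L[ℝ] ℝ => L (Pi.single j 1)) rfl
  have key := integral_mul_fderiv_eq_neg_fderiv_mul_of_integrable
    (f := fun _ : Fin n → ℝ => (1:ℝ)) (g := g) (v := Pi.single j 1) (μ := volume)
    (by simp [fderiv_fun_const]) 
    (by simpa using hderiv_cont.integrable_of_hasCompactSupport hderiv_cs)
    (by simpa using hg_sm.continuous.integrable_of_hasCompactSupport hg_cs)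
    (fun x _ => differentiable_const 1 x) (fun x _ => hg_diff x)
  simp only [fderiv_fun_const, Pi.zero_apply, ContinuousLinearMap.zero_apply, zero_mul,
    one_mul, integral_zero, neg_zero] at key
  calc ∫ x : Fin n → ℝ, fderiv ℝ lam x (Pi.single j 1) i
      = ∫ x : Fin n → ℝ, fderiv ℝ g x (Pi.single j 1) := by
        congr 1; funext x; rw [hfd]
    _ = 0 := key

/-- if `Du(x) ∈ O(n)·A` a.e., then `T(Du(x)) = T(A)` a.e. and `u` is a weak
solution of the energy-momentum equations. -/
theorem stmt_6 (n : ℕ) (hn : 1 ≤ n) (W : Mat n → ℝ) (hW : ContDiff ℝ 1 W)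
    (gradW : Mat n → Mat n)
    (hgrad : ∀ X H : Mat n, HasDerivAt (fun t : ℝ => W (X + t • H)) (frob (gradW X) H) 0)
    (hFI : ∀ R ∈ On n, ∀ X : Mat n, W (R * X) = W X)
    (A : Mat n) (Ω : Set (Fin n → ℝ)) (hop : IsOpen Ω)
    (u : (Fin n → ℝ) → (Fin n → ℝ)) (K : NNReal) (huLip : LipschitzOnWith K u Ω)
    (Du : (Fin n → ℝ) → Mat n)
    (hDu : ∀ᵐ x ∂volume, x ∈ Ω →
      HasFDerivAt u (matCLM (Du x)) x ∧ ∃ R ∈ On n, Du x = R * A) :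
    (∀ᵐ x ∂volume, x ∈ Ω → EMT W gradW (Du x) = EMT W gradW A) ∧
    (∀ lam, IsTestFun Ω lam →
      ∫ x in Ω, frob (EMT W gradW (Du x)) (jac lam x) = 0) := by
  have haeq : ∀ᵐ x ∂volume, x ∈ Ω → EMT W gradW (Du x) = EMT W gradW A := by
    filter_upwards [hDu] with x hx hxΩ
    obtain ⟨-, R, hR, hRA⟩ := hx hxΩ
    rw [hRA, EMT_orth W gradW hgrad hFI hR A]
  refine ⟨haeq, fun lam hlam => ?_⟩
  obtain ⟨hsm, hcs, hsupp⟩ := hlam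
  have hstep : ∫ x in Ω, frob (EMT W gradW (Du x)) (jac lam x)
      = ∫ x in Ω, frob (EMT W gradW A) (jac lam x) := by
    apply integral_congr_ae
    have : ∀ᵐ x ∂(volume.restrict Ω), x ∈ Ω := ae_restrict_mem hop.measurableSet
    filter_upwards [ae_restrict_of_ae haeq, this] with x hx hxΩ
    rw [hx hxΩ]
  rw [hstep]
  -- integrability of each partial derivative
  have hdc : ∀ j : Fin n, Continuous fun x => fderiv ℝ lam x (Pi.single j 1) :=
    fun j => (hsm.continuous_fderiv (by simp)).clm_apply continuous_const
  have hint : ∀ i j : Fin n,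
      Integrable (fun x => fderiv ℝ lam x (Pi.single j 1) i) (volume.restrict Ω) := by
    intro i j
    have hc : Continuous fun x => fderiv ℝ lam x (Pi.single j 1) i :=
      (continuous_apply i).comp (hdc j)
    have hcsd : HasCompactSupport fun x => fderiv ℝ lam x (Pi.single j 1) i := by
      apply HasCompactSupport.comp_left (g := fun L : (Fin n → ℝ) →L[ℝ] (Fin n → ℝ) =>
        L (Pi.single j 1) i) (hcs.fderiv ℝ) rfl
    exact (hc.integrable_of_hasCompactSupport hcsd).integrableOn
  have hzero : ∀ x, x ∉ Ω → ∀ i j : Fin n, fderiv ℝ lam x (Pi.single j 1) i = 0 := by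
    intro x hx i j
    have : x ∉ tsupport lam := fun hxt => hx (hsupp hxt)
    have h0 : fderiv ℝ lam x = 0 := by
      by_contra h
      exact this (support_fderiv_subset ℝ (Function.mem_support.mpr h))
    rw [h0]; rfl
  have hij : ∀ i j : Fin n, ∫ x in Ω, fderiv ℝ lam x (Pi.single j 1) i = 0 := by
    intro i j
    rw [setIntegral_eq_integral_of_forall_compl_eq_zero (fun x hx => hzero x hx i j)]
    exact integral_fderiv_component hsm hcs i j
  calc ∫ x in Ω, frob (EMT W gradW A) (jac lam x)
      = ∫ x in Ω, ∑ j, ∑ i, EMT W gradW A i j * fderiv ℝ lam x (Pi.single j 1) i := by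
        exact integral_congr_ae (Filter.Eventually.of_forall fun x => frob_eq_sum _ _)
    _ = ∑ j, ∑ i, ∫ x in Ω, EMT W gradW A i j * fderiv ℝ lam x (Pi.single j 1) i := by
        rw [integral_finset_sum _
          (fun j _ => integrable_finset_sum _ fun i _ => (hint i j).const_mul _)]
        exact Finset.sum_congr rfl fun j _ => integral_finset_sum _
          fun i _ => (hint i j).const_mul _
    _ = 0 := by
        apply Finset.sum_eq_zero; intro j _
        apply Finset.sum_eq_zero; intro i _
        rw [integral_const_mul, hij i j, mul_zero]
end
end

section
/- Let n ≥ 1 and let W : M_n(ℝ) → ℝ be C¹, frame indifferent, and strictly rank-one convex. Then the gradient ∇W(I) at the identity matrix is symmetric, and ⟨ξ, ∇W(I)ξ⟩ ≠ 0 for every unit vector ξ ∈ ℝⁿ; consequently either ⟨ξ, ∇W(I)ξ⟩ > 0 for all unit ξ or ⟨ξ, ∇W(I)ξ⟩ < 0 for all unit ξ, i.e. ∇W(I) is either positive definite or negative definite as a quadratic form. -/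
open MeasureTheory Matrix

attribute [local instance] Matrix.normedAddCommGroup Matrix.normedSpace

noncomputable section

/- ### Auxiliary lemmas -/

lemma vecMulVec_mul' {n : ℕ} (a b c d : Fin n → ℝ) :
    vecMulVec a b * vecMulVec c d = (b ⬝ᵥ c) • vecMulVec a d := by
  ext i j
  simp only [Matrix.mul_apply, vecMulVec_apply, Matrix.smul_apply, smul_eq_mul, dotProduct,
    Finset.sum_mul]
  exact Finset.sum_congr rfl fun k _ => by ring

lemma vecMulVec_transpose' {n : ℕ} (a b : Fin n → ℝ) :
    (vecMulVec a b)ᵀ = vecMulVec b a := by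
  ext i j; simp [vecMulVec_apply, mul_comm]

lemma frob_sub' {n : ℕ} (G A B : Mat n) : frob G (A - B) = frob G A - frob G B := by
  simp [frob, Matrix.mul_sub]

lemma frob_vecMulVec' {n : ℕ} (G : Mat n) (a b : Fin n → ℝ) :
    frob G (vecMulVec a b) = a ⬝ᵥ G.mulVec b := by
  simp only [frob, Matrix.trace, Matrix.diag_apply, Matrix.mul_apply, Matrix.transpose_apply,
    vecMulVec_apply, dotProduct, Matrix.mulVec, Finset.mul_sum]
  rw [Finset.sum_comm]
  exact Finset.sum_congr rfl fun i _ => Finset.sum_congr rfl fun k _ => by ring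

lemma line_hasDerivAt {n : ℕ} (H : Mat n) :
    HasDerivAt (fun t : ℝ => (1 : Mat n) + t • H) H 0 := by
  have h := ((hasDerivAt_id (0 : ℝ)).smul_const H).const_add (1 : Mat n)
  rw [one_smul] at h
  exact h

lemma refl_mul_line {n : ℕ} (P : Mat n) (t : ℝ) (hPP : P * P = P) :
    ((1 : Mat n) - (2 : ℝ) • P) * ((1 : Mat n) + t • P) = 1 + (-2 - t) • P := by
  simp only [sub_mul, mul_sub, mul_add, add_mul, one_mul, mul_one, smul_mul_assoc,
    mul_smul_comm, smul_smul, hPP]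
  module

lemma refl_orth {n : ℕ} (P : Mat n) (hPP : P * P = P) :
    ((1 : Mat n) - (2 : ℝ) • P) * ((1 : Mat n) - (2 : ℝ) • P) = 1 := by
  simp only [sub_mul, mul_sub, mul_add, add_mul, one_mul, mul_one, smul_mul_assoc,
    mul_smul_comm, smul_smul, hPP]
  module

lemma rot_orth {n : ℕ} (Q S : Mat n) (c s : ℝ) (hcs : c ^ 2 + 2 * c + s ^ 2 = 0)
    (hQQ : Q * Q = Q) (hQS : Q * S = S) (hSQ : S * Q = S) (hSS : S * S = -Q) :
    ((1 : Mat n) + c • Q - s • S) * ((1 : Mat n) + c • Q + s • S) = 1 := by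
  simp only [sub_mul, mul_sub, mul_add, add_mul, one_mul, mul_one, smul_mul_assoc,
    mul_smul_comm, smul_smul, hQQ, hQS, hSQ, hSS]
  match_scalars
  · ring
  · nlinarith [hcs]
  · ring

lemma slope_pos_of_hasDerivAt (f : ℝ → ℝ) (d : ℝ) (hconv : ConvexOn ℝ (Set.univ : Set ℝ) f)
    (hd : HasDerivAt f d 0) (hlt : f (-1) < f 0) : 0 < d := by
  have key : ∀ t : ℝ, 0 < t → f 0 - f (-1) ≤ slope f 0 t := by
    intro t ht
    have h := hconv.slope_mono_adjacent (Set.mem_univ (-1)) (Set.mem_univ t)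
      (by norm_num : (-1 : ℝ) < 0) ht
    rw [slope_def_field]
    calc f 0 - f (-1) = (f 0 - f (-1)) / (0 - (-1)) := by norm_num
    _ ≤ (f t - f 0) / (t - 0) := h
  have htend : Filter.Tendsto (slope f 0) (nhdsWithin 0 (Set.Ioi 0)) (nhds d) :=
    (hasDerivAt_iff_tendsto_slope.mp hd).mono_left
      (nhdsWithin_mono _ (fun x hx => ne_of_gt hx))
  have : f 0 - f (-1) ≤ d :=
    ge_of_tendsto htend (eventually_mem_nhdsWithin.mono fun t ht => key t ht)
  linarith

/-- if `W` is `C¹`, frame indifferent and strictly rank-one convex, then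
`∇W(I)` is symmetric, `⟨ξ, ∇W(I)ξ⟩ ≠ 0` for every unit vector `ξ`, and `∇W(I)` is either
positive definite or negative definite as a quadratic form. -/
theorem stmt_10 (n : ℕ) (hn : 1 ≤ n) (W : Mat n → ℝ) (hW : ContDiff ℝ 1 W)
    (gradW : Mat n → Mat n)
    (hgrad : ∀ X H : Mat n, HasDerivAt (fun t : ℝ => W (X + t • H)) (frob (gradW X) H) 0)
    (hFI : ∀ R ∈ On n, ∀ X : Mat n, W (R * X) = W X)
    (hSRC : ∀ (A : Mat n) (a b : Fin n → ℝ), a ≠ 0 → b ≠ 0 →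
      StrictConvexOn ℝ (Set.univ : Set ℝ) (fun t : ℝ => W (A + t • Matrix.vecMulVec a b))) :
    (gradW 1)ᵀ = gradW 1 ∧
    (∀ ξ : Fin n → ℝ, ξ ⬝ᵥ ξ = 1 → ξ ⬝ᵥ (gradW 1).mulVec ξ ≠ 0) ∧
    ((∀ ξ : Fin n → ℝ, ξ ⬝ᵥ ξ = 1 → 0 < ξ ⬝ᵥ (gradW 1).mulVec ξ) ∨
      (∀ ξ : Fin n → ℝ, ξ ⬝ᵥ ξ = 1 → ξ ⬝ᵥ (gradW 1).mulVec ξ < 0)) := by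
  have hWd : Differentiable ℝ W := hW.differentiable (by norm_num)
  -- relation between fderiv and gradW via uniqueness of derivatives
  have hfd : ∀ H : Mat n, frob (gradW 1) H = fderiv ℝ W (1 : Mat n) H := by
    intro H
    have h1 : HasDerivAt (fun t : ℝ => (1 : Mat n) + t • H) H 0 := line_hasDerivAt H
    have h2 := (hWd ((1 : Mat n) + (0 : ℝ) • H)).hasFDerivAt.comp_hasDerivAt 0 h1
    rw [show (1 : Mat n) + (0 : ℝ) • H = 1 by simp] at h2
    exact (hgrad 1 H).unique h2
  -- Symmetry of gradW 1
  have hskew : ∀ i j : Fin n, gradW 1 i j = gradW 1 j i := by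
    intro i j
    rcases eq_or_ne i j with rfl | hij
    · rfl
    · set ei : Fin n → ℝ := Pi.single i 1 with hei
      set ej : Fin n → ℝ := Pi.single j 1 with hej
      have dii : ei ⬝ᵥ ei = 1 := by simp [hei, dotProduct, Pi.single_apply]
      have djj : ej ⬝ᵥ ej = 1 := by simp [hej, dotProduct, Pi.single_apply]
      have dij : ei ⬝ᵥ ej = 0 := by
        simp [hei, hej, dotProduct, Pi.single_apply, hij.symm]
      have dji : ej ⬝ᵥ ei = 0 := by
        simp [hei, hej, dotProduct, Pi.single_apply, hij]
      set Q : Mat n := vecMulVec ei ei + vecMulVec ej ej with hQ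
      set S : Mat n := vecMulVec ei ej - vecMulVec ej ei with hS
      have hQQ : Q * Q = Q := by
        simp only [hQ, add_mul, mul_add, vecMulVec_mul', dii, djj, dij, dji, one_smul, zero_smul,
          add_zero, zero_add]
      have hQS : Q * S = S := by
        simp only [hQ, hS, add_mul, mul_sub, vecMulVec_mul', dii, djj, dij, dji, one_smul,
          zero_smul, sub_zero, zero_sub]
        abel
      have hSQ : S * Q = S := by
        simp only [hQ, hS, sub_mul, mul_add, vecMulVec_mul', dii, djj, dij, dji, one_smul,
          zero_smul, add_zero, zero_add]
        abel
      have hSS : S * S = -Q := by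
        simp only [hQ, hS, sub_mul, mul_sub, vecMulVec_mul', dii, djj, dij, dji, one_smul,
          zero_smul, sub_zero, zero_sub]
        abel
      have hQT : Qᵀ = Q := by
        simp only [hQ, transpose_add, vecMulVec_transpose']
      have hST : Sᵀ = -S := by
        simp only [hS, transpose_sub, vecMulVec_transpose']
        abel
      -- rotation curve
      set R : ℝ → Mat n := fun θ => (1 : Mat n) + (Real.cos θ - 1) • Q + Real.sin θ • S with hRdef
      have hRorth : ∀ θ : ℝ, R θ ∈ On n := by
        intro θ
        have hcs : (Real.cos θ - 1) ^ 2 + 2 * (Real.cos θ - 1) + (Real.sin θ) ^ 2 = 0 := by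
          have := Real.sin_sq_add_cos_sq θ; nlinarith
        have hT : (R θ)ᵀ = (1 : Mat n) + (Real.cos θ - 1) • Q - Real.sin θ • S := by
          simp only [hRdef, transpose_add, transpose_one, transpose_smul, hQT, hST, smul_neg]
          abel
        show (R θ)ᵀ * R θ = 1
        rw [hT]
        exact rot_orth Q S _ _ hcs hQQ hQS hSQ hSS
      have hR0 : R 0 = 1 := by simp [hRdef]
      have hRder : HasDerivAt R S 0 := by
        have h1 : HasDerivAt (fun θ : ℝ => Real.cos θ - 1) (-Real.sin 0) 0 :=
          (Real.hasDerivAt_cos 0).sub_const 1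
        have h2 : HasDerivAt Real.sin (Real.cos 0) 0 := Real.hasDerivAt_sin 0
        have := ((h1.smul_const Q).const_add (1 : Mat n)).add (h2.smul_const S)
        simp only [Real.sin_zero, Real.cos_zero, neg_zero, zero_smul, zero_add, one_smul] at this
        exact this
      have hWR : (fun θ : ℝ => W (R θ)) = fun _ => W 1 := by
        funext θ
        have := hFI (R θ) (hRorth θ) 1
        rwa [mul_one] at this
      have hcomp : HasDerivAt (fun θ : ℝ => W (R θ)) (fderiv ℝ W (1 : Mat n) S) 0 := by
        have := (hWd (R 0)).hasFDerivAt.comp_hasDerivAt 0 hRder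
        rwa [hR0] at this
      have hzero : fderiv ℝ W (1 : Mat n) S = 0 := by
        have hc : HasDerivAt (fun θ : ℝ => W (R θ)) 0 0 := by
          rw [hWR]; exact hasDerivAt_const 0 (W 1)
        exact hcomp.unique hc
      have hfrobS : frob (gradW 1) S = 0 := by rw [hfd S, hzero]
      have : gradW 1 i j - gradW 1 j i = 0 := by
        rw [hS, frob_sub', frob_vecMulVec', frob_vecMulVec'] at hfrobS
        simpa [hei, hej, Matrix.mulVec_single, dotProduct, Pi.single_apply] using hfrobS
      linarith
  -- Positivity of the quadratic form
  have hpos : ∀ ξ : Fin n → ℝ, ξ ⬝ᵥ ξ = 1 → 0 < ξ ⬝ᵥ (gradW 1).mulVec ξ := by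
    intro ξ hξ
    have hξ0 : ξ ≠ 0 := by
      intro h; rw [h] at hξ; simp [dotProduct] at hξ
    set P : Mat n := vecMulVec ξ ξ with hP
    have hPP : P * P = P := by rw [hP, vecMulVec_mul', hξ, one_smul]
    have hPT : Pᵀ = P := by rw [hP, vecMulVec_transpose']
    set f : ℝ → ℝ := fun t => W (1 + t • P) with hf
    have hRorth : ((1 : Mat n) - (2 : ℝ) • P) ∈ On n := by
      show ((1 : Mat n) - (2 : ℝ) • P)ᵀ * ((1 : Mat n) - (2 : ℝ) • P) = 1
      rw [transpose_sub, transpose_one, transpose_smul, hPT]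
      exact refl_orth P hPP
    have hsym : ∀ t : ℝ, f (-2 - t) = f t := by
      intro t
      have h1 := hFI _ hRorth ((1 : Mat n) + t • P)
      rw [refl_mul_line P t hPP] at h1
      exact h1
    have hconv : StrictConvexOn ℝ (Set.univ : Set ℝ) f := hSRC 1 ξ ξ hξ0 hξ0
    have hlt : f (-1) < f 0 := by
      have h := hconv.2 (Set.mem_univ (0 : ℝ)) (Set.mem_univ (-2 : ℝ)) (by norm_num)
        (by norm_num : (0 : ℝ) < 1 / 2) (by norm_num : (0 : ℝ) < 1 / 2) (by norm_num)
      have h2 : f (-2) = f 0 := by simpa using hsym 0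
      rw [smul_eq_mul, smul_eq_mul, smul_eq_mul, h2] at h
      calc f (-1) = f ((1 / 2 : ℝ) * 0 + (1 / 2 : ℝ) * (-2)) := by norm_num
      _ < 1 / 2 * f 0 + 1 / 2 * f 0 := h
      _ = f 0 := by ring
    have hd : HasDerivAt f (frob (gradW 1) P) 0 := hgrad 1 P
    have := slope_pos_of_hasDerivAt f _ hconv.convexOn hd hlt
    rwa [hP, frob_vecMulVec'] at this
  refine ⟨?_, fun ξ hξ => ne_of_gt (hpos ξ hξ), Or.inl hpos⟩
  ext i j
  rw [transpose_apply]
  exact hskew j i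
end
end

section
/- Let n ≥ 1 and let p > 1 be a real number with p ≠ n. For a symmetric positive definite matrix Y ∈ M_n(ℝ) define the reduced energy-momentum map 𝒯(Y) = p·tr(Y)^{(p−2)/2}·Y − tr(Y)^{p/2}·I (arising from the Dirichlet p-energy density W(X) = |X|^p with Y = XᵀX). Then (i) tr(𝒯(Y)) = (p − n)·tr(Y)^{p/2}; (ii) if 𝒯(Y) = Z then tr(Y) = ((p−n)^{-1}·tr(Z))^{2/p} and Y = (Z + (p−n)^{-1}·tr(Z)·I) / (p·((p−n)^{-1}·tr(Z))^{(p−2)/p}); in particular 𝒯 is injective on the set of symmetric positive definite matrices. -/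
open MeasureTheory Matrix

attribute [local instance] Matrix.normedAddCommGroup Matrix.normedSpace

noncomputable section

/-- The reduced energy-momentum map of the Dirichlet `p`-energy,
`𝒯(Y) = p tr(Y)^((p−2)/2) Y − tr(Y)^(p/2) I`. -/
noncomputable def Tred (n : ℕ) (p : ℝ) (Y : Mat n) : Mat n :=
  (p * Y.trace ^ ((p - 2) / 2)) • Y - (Y.trace ^ (p / 2)) • (1 : Mat n)

/-- for `p > 1`, `p ≠ n`: (i) `tr 𝒯(Y) = (p − n) tr(Y)^(p/2)`;
(ii) `𝒯(Y) = Z` determines `tr Y` and `Y` explicitly; in particular `𝒯` is injective on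
symmetric positive definite matrices. -/
theorem stmt_12 (n : ℕ) (hn : 1 ≤ n) (p : ℝ) (hp : 1 < p) (hpn : p ≠ (n : ℝ)) :
    (∀ Y : Mat n, Y.PosDef → (Tred n p Y).trace = (p - n) * Y.trace ^ (p / 2)) ∧
    (∀ Y Z : Mat n, Y.PosDef → Tred n p Y = Z →
      Y.trace = ((p - n)⁻¹ * Z.trace) ^ (2 / p) ∧
      Y = (p * ((p - n)⁻¹ * Z.trace) ^ ((p - 2) / p))⁻¹ •
        (Z + ((p - n)⁻¹ * Z.trace) • (1 : Mat n))) ∧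
    Set.InjOn (Tred n p) {Y : Mat n | Y.PosDef} := by
  haveI : Nonempty (Fin n) := Fin.pos_iff_nonempty.mp hn
  have hp0 : p ≠ 0 := by linarith
  have hpn' : p - (n : ℝ) ≠ 0 := sub_ne_zero.mpr hpn
  have htrace : ∀ Y : Mat n, Y.PosDef → 0 < Y.trace := by
    intro Y hY
    have hdiag : ∀ i, 0 < Y i i := by
      intro i
      have := hY.dotProduct_mulVec_pos (x := Pi.single i 1) (by simp [Pi.single_eq_same, Function.ne_iff])
      simpa [dotProduct, Matrix.mulVec, Pi.single_apply, Finset.sum_ite_eq,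
        Finset.mul_sum] using this
    exact Finset.sum_pos (fun i _ => hdiag i) Finset.univ_nonempty
  have key : ∀ Y : Mat n, Y.PosDef → (Tred n p Y).trace = (p - n) * Y.trace ^ (p / 2) := by
    intro Y hY
    have ht : 0 < Y.trace := htrace Y hY
    have h1 : Y.trace ^ ((p - 2) / 2) * Y.trace = Y.trace ^ (p / 2) := by
      rw [show p / 2 = (p - 2) / 2 + 1 by ring, Real.rpow_add ht, Real.rpow_one]
    simp only [Tred, Matrix.trace_sub, Matrix.trace_smul, Matrix.trace_one, smul_eq_mul,
      Fintype.card_fin]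
    nlinarith [h1]
  have key2 : ∀ Y Z : Mat n, Y.PosDef → Tred n p Y = Z →
      Y.trace = ((p - n)⁻¹ * Z.trace) ^ (2 / p) ∧
      Y = (p * ((p - n)⁻¹ * Z.trace) ^ ((p - 2) / p))⁻¹ •
        (Z + ((p - n)⁻¹ * Z.trace) • (1 : Mat n)) := by
    intro Y Z hY hYZ
    have ht : 0 < Y.trace := htrace Y hY
    have htr : Z.trace = (p - n) * Y.trace ^ (p / 2) := by rw [← hYZ]; exact key Y hY
    have hZ : (p - n)⁻¹ * Z.trace = Y.trace ^ (p / 2) := by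
      rw [htr, ← mul_assoc, inv_mul_cancel₀ hpn', one_mul]
    have h2 : ((p - n)⁻¹ * Z.trace) ^ (2 / p) = Y.trace := by
      rw [hZ, ← Real.rpow_mul ht.le, show p / 2 * (2 / p) = 1 by field_simp, Real.rpow_one]
    have h3 : ((p - n)⁻¹ * Z.trace) ^ ((p - 2) / p) = Y.trace ^ ((p - 2) / 2) := by
      rw [hZ, ← Real.rpow_mul ht.le, show p / 2 * ((p - 2) / p) = (p - 2) / 2 by field_simp]
    have ha : p * Y.trace ^ ((p - 2) / 2) ≠ 0 :=
      ne_of_gt (mul_pos (by linarith) (Real.rpow_pos_of_pos ht _))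
    refine ⟨h2.symm, ?_⟩
    rw [h3, hZ]
    have hsolve : (p * Y.trace ^ ((p - 2) / 2)) • Y = Z + (Y.trace ^ (p / 2)) • (1 : Mat n) := by
      rw [← hYZ, Tred]; abel
    rw [← hsolve, smul_smul, inv_mul_cancel₀ ha, one_smul]
  refine ⟨key, key2, ?_⟩
  intro Y1 h1 Y2 h2 heq
  have e1 := (key2 Y1 (Tred n p Y2) h1 heq).2
  have e2 := (key2 Y2 (Tred n p Y2) h2 rfl).2
  exact e1.trans e2.symm
end
end

section
/- Let W(X) = |X|² / |det(X)|, defined and differentiable on the invertible 2×2 real matrices GL(2,ℝ). Then ∇W(X) = 0 for every X ∈ O(2). Consequently, for every open set Ω ⊆ ℝ² and every Lipschitz map u : Ω → ℝ² with Du(x) ∈ O(2) for almost every x ∈ Ω, u is a weak solution of the Euler–Lagrange equations on Ω: ∫_Ω ⟨∇W(Du(x)), Dλ(x)⟩ dx = 0 for every smooth compactly supported λ : Ω → ℝ². -/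
open MeasureTheory Matrix

attribute [local instance] Matrix.normedAddCommGroup Matrix.normedSpace

noncomputable section

/-- The distortion density `W(X) = |X|² / |det X|` on `GL(2,ℝ)`. -/
noncomputable def W14 (X : Mat 2) : ℝ := (Xᵀ * X).trace / |X.det|


lemma lin' (a b : ℝ) : HasDerivAt (fun t : ℝ => a + t * b) b 0 := by
  simpa using ((hasDerivAt_id (0:ℝ)).mul_const b).const_add a

set_option linter.unreachableTactic false in
set_option linter.unusedTactic false in
lemma key14 (X : Mat 2) (hX : X ∈ On 2) (H : Mat 2) :
    HasDerivAt (fun t : ℝ => W14 (X + t • H)) 0 0 := by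
  have hX' : Xᵀ * X = 1 := hX
  have e00 : X 0 0 * X 0 0 + X 1 0 * X 1 0 = 1 := by
    have := congrFun (congrFun hX' 0) 0
    simpa [Matrix.mul_apply, Fin.sum_univ_two, Matrix.one_apply] using this
  have e01 : X 0 0 * X 0 1 + X 1 0 * X 1 1 = 0 := by
    have := congrFun (congrFun hX' 0) 1
    simpa [Matrix.mul_apply, Fin.sum_univ_two, Matrix.one_apply] using this
  have e11 : X 0 1 * X 0 1 + X 1 1 * X 1 1 = 1 := by
    have := congrFun (congrFun hX' 1) 1
    simpa [Matrix.mul_apply, Fin.sum_univ_two, Matrix.one_apply] using this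
  have hd : X.det = X 0 0 * X 1 1 - X 0 1 * X 1 0 := Matrix.det_fin_two X
  have hdet2 : X.det * X.det = 1 := by
    have := congrArg Matrix.det hX'
    simpa [Matrix.det_mul] using this
  have hfe : (fun t : ℝ => W14 (X + t • H)) = (fun t : ℝ =>
      ((X 0 0 + t * H 0 0) * (X 0 0 + t * H 0 0) + (X 0 1 + t * H 0 1) * (X 0 1 + t * H 0 1)
        + (X 1 0 + t * H 1 0) * (X 1 0 + t * H 1 0) + (X 1 1 + t * H 1 1) * (X 1 1 + t * H 1 1)) /
      |(X 0 0 + t * H 0 0) * (X 1 1 + t * H 1 1) - (X 0 1 + t * H 0 1) * (X 1 0 + t * H 1 0)|) := by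
    funext t
    simp only [W14, Matrix.det_fin_two, Matrix.trace_fin_two, Matrix.mul_apply,
      Matrix.transpose_apply, Matrix.add_apply, Matrix.smul_apply, Fin.sum_univ_two,
      smul_eq_mul]
    congr 1
    all_goals first | ring | (congr 1; ring)
  rw [hfe]
  -- numerator derivative
  have sqd : ∀ a b : ℝ, HasDerivAt (fun t : ℝ => (a + t * b) * (a + t * b)) (2 * a * b) 0 := by
    intro a b
    have h := (lin' a b).mul (lin' a b)
    refine h.congr_deriv (Eq.symm ?_)
    ring
  have hnum : HasDerivAt (fun t : ℝ =>
      (X 0 0 + t * H 0 0) * (X 0 0 + t * H 0 0) + (X 0 1 + t * H 0 1) * (X 0 1 + t * H 0 1)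
        + (X 1 0 + t * H 1 0) * (X 1 0 + t * H 1 0) + (X 1 1 + t * H 1 1) * (X 1 1 + t * H 1 1))
      (2 * X 0 0 * H 0 0 + 2 * X 0 1 * H 0 1 + 2 * X 1 0 * H 1 0 + 2 * X 1 1 * H 1 1) 0 :=
    ((((sqd _ _).add (sqd _ _)).add (sqd _ _)).add (sqd _ _))
  have hden : HasDerivAt (fun t : ℝ =>
      (X 0 0 + t * H 0 0) * (X 1 1 + t * H 1 1) - (X 0 1 + t * H 0 1) * (X 1 0 + t * H 1 0))
      (X 0 0 * H 1 1 + H 0 0 * X 1 1 - (X 0 1 * H 1 0 + H 0 1 * X 1 0)) 0 := by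
    have h := ((lin' (X 0 0) (H 0 0)).mul (lin' (X 1 1) (H 1 1))).sub
      ((lin' (X 0 1) (H 0 1)).mul (lin' (X 1 0) (H 1 0)))
    refine h.congr_deriv (Eq.symm ?_)
    ring
  have hcases : X.det = 1 ∨ X.det = -1 := by
    rcases mul_eq_zero.mp (show (X.det - 1) * (X.det + 1) = 0 by linear_combination hdet2) with h | h
    · exact Or.inl (by linarith)
    · exact Or.inr (by linarith)
  rcases hcases with hs | hs
  · -- det = 1
    have hdd : X 0 0 * X 1 1 - X 0 1 * X 1 0 = 1 := by rw [← hd]; exact hs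
    have p : X 1 1 = X 0 0 := by linear_combination (-(X 1 1)) * e00 + X 0 0 * hdd + X 1 0 * e01
    have q : X 0 1 = -(X 1 0) := by linear_combination X 0 0 * e01 - X 1 0 * hdd - X 0 1 * e00
    have hden0 : (X 0 0 + (0:ℝ) * H 0 0) * (X 1 1 + 0 * H 1 1)
        - (X 0 1 + 0 * H 0 1) * (X 1 0 + 0 * H 1 0) = 1 := by
      simpa using hdd
    have hpos : ∀ᶠ t in nhds (0:ℝ), 0 < (X 0 0 + t * H 0 0) * (X 1 1 + t * H 1 1)
        - (X 0 1 + t * H 0 1) * (X 1 0 + t * H 1 0) :=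
      hden.continuousAt.eventually (eventually_gt_nhds (show (0:ℝ) <
        (X 0 0 + (0:ℝ) * H 0 0) * (X 1 1 + 0 * H 1 1) - (X 0 1 + 0 * H 0 1) * (X 1 0 + 0 * H 1 0)
        by rw [hden0]; norm_num))
    have habs : HasDerivAt (fun t : ℝ =>
        |(X 0 0 + t * H 0 0) * (X 1 1 + t * H 1 1) - (X 0 1 + t * H 0 1) * (X 1 0 + t * H 1 0)|)
        (X 0 0 * H 1 1 + H 0 0 * X 1 1 - (X 0 1 * H 1 0 + H 0 1 * X 1 0)) 0 :=
      hden.congr_of_eventuallyEq (hpos.mono fun t ht => abs_of_pos ht)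
    have hne : |(X 0 0 + (0:ℝ) * H 0 0) * (X 1 1 + 0 * H 1 1)
        - (X 0 1 + 0 * H 0 1) * (X 1 0 + 0 * H 1 0)| ≠ 0 := by
      rw [hden0]; norm_num
    have hN0 : (X 0 0 + (0:ℝ) * H 0 0) * (X 0 0 + 0 * H 0 0)
        + (X 0 1 + 0 * H 0 1) * (X 0 1 + 0 * H 0 1)
        + (X 1 0 + 0 * H 1 0) * (X 1 0 + 0 * H 1 0)
        + (X 1 1 + 0 * H 1 1) * (X 1 1 + 0 * H 1 1) = 2 := by
      linear_combination e00 + e11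
    have h := hnum.div habs hne
    refine h.congr_deriv (Eq.symm ?_)
    rw [hden0, hN0, abs_one, one_pow, div_one, mul_one, p, q]
    ring
  · -- det = -1
    have hdd : X 0 0 * X 1 1 - X 0 1 * X 1 0 = -1 := by rw [← hd]; exact hs
    have p : X 1 1 = -(X 0 0) := by linear_combination (-(X 1 1)) * e00 + X 0 0 * hdd + X 1 0 * e01
    have q : X 0 1 = X 1 0 := by linear_combination X 0 0 * e01 - X 1 0 * hdd - X 0 1 * e00
    have hden0 : (X 0 0 + (0:ℝ) * H 0 0) * (X 1 1 + 0 * H 1 1)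
        - (X 0 1 + 0 * H 0 1) * (X 1 0 + 0 * H 1 0) = -1 := by
      simpa using hdd
    have hneg : ∀ᶠ t in nhds (0:ℝ), (X 0 0 + t * H 0 0) * (X 1 1 + t * H 1 1)
        - (X 0 1 + t * H 0 1) * (X 1 0 + t * H 1 0) < 0 :=
      hden.continuousAt.eventually (eventually_lt_nhds (show
        (X 0 0 + (0:ℝ) * H 0 0) * (X 1 1 + 0 * H 1 1) - (X 0 1 + 0 * H 0 1) * (X 1 0 + 0 * H 1 0)
        < 0 by rw [hden0]; norm_num))
    have habs : HasDerivAt (fun t : ℝ =>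
        |(X 0 0 + t * H 0 0) * (X 1 1 + t * H 1 1) - (X 0 1 + t * H 0 1) * (X 1 0 + t * H 1 0)|)
        (-(X 0 0 * H 1 1 + H 0 0 * X 1 1 - (X 0 1 * H 1 0 + H 0 1 * X 1 0))) 0 :=
      hden.neg.congr_of_eventuallyEq (hneg.mono fun t ht => abs_of_neg ht)
    have hne : |(X 0 0 + (0:ℝ) * H 0 0) * (X 1 1 + 0 * H 1 1)
        - (X 0 1 + 0 * H 0 1) * (X 1 0 + 0 * H 1 0)| ≠ 0 := by
      rw [hden0]; norm_num
    have hN0 : (X 0 0 + (0:ℝ) * H 0 0) * (X 0 0 + 0 * H 0 0)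
        + (X 0 1 + 0 * H 0 1) * (X 0 1 + 0 * H 0 1)
        + (X 1 0 + 0 * H 1 0) * (X 1 0 + 0 * H 1 0)
        + (X 1 1 + 0 * H 1 1) * (X 1 1 + 0 * H 1 1) = 2 := by
      linear_combination e00 + e11
    have h := hnum.div habs hne
    refine h.congr_deriv (Eq.symm ?_)
    rw [hden0, hN0]
    simp only [abs_neg, abs_one, one_pow, div_one, mul_one]
    rw [p, q]
    ring


lemma det_ne_On (X : Mat 2) (hX : X ∈ On 2) : X.det ≠ 0 := by
  have h1 : X.det * X.det = 1 := by
    have := congrArg Matrix.det (show Xᵀ * X = 1 from hX)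
    simpa [Matrix.det_mul] using this
  intro h
  rw [h] at h1
  norm_num at h1

/-- `∇W(X) = 0` for every `X ∈ O(2)`; consequently every Lipschitz map with
`Du(x) ∈ O(2)` a.e. is a weak solution of the Euler–Lagrange equations of `W`. -/
theorem stmt_14 :
    (∀ X ∈ On 2, ∀ H : Mat 2, HasDerivAt (fun t : ℝ => W14 (X + t • H)) 0 0) ∧
    (∀ gradW : Mat 2 → Mat 2,
      (∀ X : Mat 2, X.det ≠ 0 →
        ∀ H : Mat 2, HasDerivAt (fun t : ℝ => W14 (X + t • H)) (frob (gradW X) H) 0) →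
      (∀ X ∈ On 2, gradW X = 0) ∧
      ∀ (Ω : Set (Fin 2 → ℝ)), IsOpen Ω →
        ∀ (u : (Fin 2 → ℝ) → (Fin 2 → ℝ)) (K : NNReal), LipschitzOnWith K u Ω →
          ∀ Du : (Fin 2 → ℝ) → Mat 2,
            (∀ᵐ x ∂volume, x ∈ Ω → HasFDerivAt u (matCLM (Du x)) x ∧ Du x ∈ On 2) →
            ∀ lam, IsTestFun Ω lam →
              ∫ x in Ω, frob (gradW (Du x)) (jac lam x) = 0) := by
  have key : ∀ X ∈ On 2, ∀ H : Mat 2, HasDerivAt (fun t : ℝ => W14 (X + t • H)) 0 0 :=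
    fun X hX H => key14 X hX H
  refine ⟨key, fun gradW hg => ?_⟩
  have hzero : ∀ X ∈ On 2, gradW X = 0 := by
    intro X hX
    have huniq : ∀ H : Mat 2, frob (gradW X) H = 0 :=
      fun H => (hg X (det_ne_On X hX) H).unique (key X hX H)
    have hAA := huniq (gradW X)
    simp only [frob, Matrix.trace_fin_two, Matrix.mul_apply, Matrix.transpose_apply,
      Fin.sum_univ_two] at hAA
    have nn := fun i j => mul_self_nonneg (gradW X i j)
    have h00 : gradW X 0 0 = 0 := by nlinarith [nn 0 0, nn 0 1, nn 1 0, nn 1 1]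
    have h01 : gradW X 0 1 = 0 := by nlinarith [nn 0 0, nn 0 1, nn 1 0, nn 1 1]
    have h10 : gradW X 1 0 = 0 := by nlinarith [nn 0 0, nn 0 1, nn 1 0, nn 1 1]
    have h11 : gradW X 1 1 = 0 := by nlinarith [nn 0 0, nn 0 1, nn 1 0, nn 1 1]
    ext i j
    fin_cases i <;> fin_cases j <;> simp only [Matrix.zero_apply] <;>
      first | exact h00 | exact h01 | exact h10 | exact h11
  refine ⟨hzero, ?_⟩
  intro Ω hΩ u K hLip Du hae lam hlam
  have h0 : ∀ᵐ x ∂(volume.restrict Ω), frob (gradW (Du x)) (jac lam x) = 0 := by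
    refine (ae_restrict_iff' hΩ.measurableSet).mpr (hae.mono fun x hx hxΩ => ?_)
    rw [hzero _ (hx hxΩ).2]
    simp [frob]
  calc ∫ x in Ω, frob (gradW (Du x)) (jac lam x) = ∫ _x in Ω, (0:ℝ) := integral_congr_ae h0
    _ = 0 := integral_zero _ _
end
end

section
/- Let W(X) = |X|² / |det(X)| on GL(2,ℝ) with energy-momentum tensor T(X) = Xᵀ∇W(X) − W(X)·I. Then for every X ∈ GL(2,ℝ): (i) T(X) = (2/|det(X)|)·(XᵀX − |X|²·I); (ii) T(tX) = T(X) for every real t ≠ 0; and (iii) det(T(X)) = 4. In particular the energy-momentum mapping X ↦ T(X) is not injective on GL(2,ℝ). -/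
open MeasureTheory Matrix

attribute [local instance] Matrix.normedAddCommGroup Matrix.normedSpace

noncomputable section

/-- The distortion density `W(X) = |X|² / |det X|` on `GL(2,ℝ)`. -/
noncomputable def W15 (X : Mat 2) : ℝ := (Xᵀ * X).trace / |X.det|

-- candidate gradient
noncomputable def G15 (X : Mat 2) : Mat 2 :=
  (2 / |X.det|) • X - ((Xᵀ * X).trace / (X.det * |X.det|)) • (X.adjugate)ᵀ

lemma frob_std (A : Mat 2) (i j : Fin 2) : frob A (Matrix.single i j 1) = A i j := by
  fin_cases i <;> fin_cases j <;>
    simp [frob, Matrix.trace_fin_two, Matrix.mul_apply, Fin.sum_univ_two,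
      Matrix.single, Matrix.transpose_apply]

lemma key (X H : Mat 2) (hX : X.det ≠ 0) :
    HasDerivAt (fun t : ℝ => W15 (X + t • H)) (frob (G15 X) H) 0 := by
  set a : ℝ := (Xᵀ * X).trace with ha
  set b : ℝ := (Xᵀ * H).trace with hb
  set c : ℝ := (Hᵀ * H).trace with hc
  set d0 : ℝ := X.det with hd0
  set e : ℝ := (X.adjugate * H).trace with he
  set dH : ℝ := H.det with hdH
  have hfun : (fun t : ℝ => W15 (X + t • H))
      = fun t : ℝ => (a + 2*b*t + c*t^2) / |d0 + e*t + dH*t^2| := by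
    funext t
    unfold W15
    congr 1
    · simp only [ha, hb, hc, Matrix.trace_fin_two, Matrix.mul_apply, Matrix.add_apply,
        Matrix.smul_apply, Matrix.transpose_apply, Fin.sum_univ_two, smul_eq_mul]
      ring
    · congr 1
      simp only [hd0, he, hdH, Matrix.det_fin_two, Matrix.adjugate_fin_two,
        Matrix.trace_fin_two, Matrix.mul_apply, Matrix.add_apply, Matrix.smul_apply,
        Fin.sum_univ_two, smul_eq_mul, Matrix.of_apply, Matrix.cons_val', Matrix.cons_val_zero,
        Matrix.cons_val_one, Matrix.head_cons, Matrix.empty_val', Matrix.cons_val_fin_one,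
        Matrix.head_fin_const]
      ring
  rw [hfun]
  have hnumD : HasDerivAt (fun t : ℝ => a + 2*b*t + c*t^2) (2*b) 0 := by
    have h := (((hasDerivAt_id (0:ℝ)).const_mul (2*b)).const_add a).add
      ((hasDerivAt_pow 2 (0:ℝ)).const_mul c)
    simpa [Pi.add_def] using h
  have hdenD : HasDerivAt (fun t : ℝ => d0 + e*t + dH*t^2) e 0 := by
    have h := (((hasDerivAt_id (0:ℝ)).const_mul e).const_add d0).add
      ((hasDerivAt_pow 2 (0:ℝ)).const_mul dH)
    simpa [Pi.add_def] using h
  have hval0 : d0 + e*0 + dH*0^2 = d0 := by ring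
  have habsD : HasDerivAt (fun t : ℝ => |d0 + e*t + dH*t^2|)
      ((SignType.sign d0 : ℝ) * e) 0 := by
    have habs' : HasDerivAt (fun x : ℝ => |x|) ((SignType.sign d0 : ℝ)) (d0 + e*0 + dH*0^2) := by
      rw [hval0]; exact hasDerivAt_abs hX
    have h := habs'.comp 0 hdenD
    simpa [Function.comp_def] using h
  have habs0 : |d0 + e*0 + dH*0^2| ≠ 0 := by simpa [hval0] using abs_ne_zero.mpr hX
  have hdiv := hnumD.div habsD habs0
  refine hdiv.congr_deriv (Eq.symm ?_)
  have h1 : |d0| ≠ 0 := abs_ne_zero.mpr hX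
  have hfrob : frob (G15 X) H = (2/|d0|) * b - (a/(d0*|d0|)) * e := by
    simp only [frob, G15, ← hd0, ← ha, Matrix.trace_fin_two, Matrix.mul_apply,
      Matrix.sub_apply, Matrix.smul_apply, Matrix.transpose_apply, Fin.sum_univ_two,
      smul_eq_mul, hb, he]
    ring
  rw [hfrob, hval0]
  rcases hX.lt_or_gt with hneg | hpos
  · rw [abs_of_neg hneg]
    simp only [sign_neg hneg, SignType.coe_neg_one]
    field_simp
    ring
  · rw [abs_of_pos hpos]
    simp only [sign_pos hpos, SignType.coe_one]
    field_simp
    ring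

lemma grad_eq (gradW : Mat 2 → Mat 2)
    (hgrad : ∀ X : Mat 2, X.det ≠ 0 →
      ∀ H : Mat 2, HasDerivAt (fun t : ℝ => W15 (X + t • H)) (frob (gradW X) H) 0)
    (X : Mat 2) (hX : X.det ≠ 0) : gradW X = G15 X := by
  ext i j
  have h := (hgrad X hX (Matrix.single i j 1)).unique (key X (Matrix.single i j 1) hX)
  simpa [frob_std] using h

lemma EMT_formula (gradW : Mat 2 → Mat 2)
    (hgrad : ∀ X : Mat 2, X.det ≠ 0 →
      ∀ H : Mat 2, HasDerivAt (fun t : ℝ => W15 (X + t • H)) (frob (gradW X) H) 0)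
    (X : Mat 2) (hX : X.det ≠ 0) :
    EMT W15 gradW X = (2 / |X.det|) • (Xᵀ * X - (Xᵀ * X).trace • (1 : Mat 2)) := by
  have h1 : |X.det| ≠ 0 := abs_ne_zero.mpr hX
  rw [EMT, grad_eq gradW hgrad X hX]
  ext i j
  fin_cases i <;> fin_cases j <;>
  · simp only [G15, W15, Matrix.det_fin_two, Matrix.adjugate_fin_two, Matrix.trace_fin_two,
      Matrix.mul_apply, Matrix.sub_apply, Matrix.smul_apply, Matrix.one_apply,
      Matrix.transpose_apply, Fin.sum_univ_two, smul_eq_mul, Matrix.of_apply,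
      Matrix.cons_val', Matrix.cons_val_zero, Matrix.cons_val_one, Matrix.head_cons,
      Matrix.empty_val', Matrix.cons_val_fin_one, Matrix.head_fin_const, Fin.zero_eta, Fin.mk_one,
      Fin.isValue, ↓reduceIte, zero_ne_one, one_ne_zero, if_false]
    rw [Matrix.det_fin_two] at hX h1
    field_simp
    ring

lemma det_smul_two (c : ℝ) (X : Mat 2) : (c • X).det = c^2 * X.det := by
  simp [Matrix.det_smul]


/-- for `W(X) = |X|²/|det X|` on `GL(2,ℝ)`:
(i) `T(X) = (2/|det X|)(XᵀX − |X|² I)`; (ii) `T(tX) = T(X)` for `t ≠ 0`;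
(iii) `det T(X) = 4`. In particular `T` is not injective on `GL(2,ℝ)`. -/
theorem stmt_15 (gradW : Mat 2 → Mat 2)
    (hgrad : ∀ X : Mat 2, X.det ≠ 0 →
      ∀ H : Mat 2, HasDerivAt (fun t : ℝ => W15 (X + t • H)) (frob (gradW X) H) 0) :
    (∀ X : Mat 2, X.det ≠ 0 →
      EMT W15 gradW X = (2 / |X.det|) • (Xᵀ * X - (Xᵀ * X).trace • (1 : Mat 2)) ∧
      (∀ t : ℝ, t ≠ 0 → EMT W15 gradW (t • X) = EMT W15 gradW X) ∧
      (EMT W15 gradW X).det = 4) ∧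
    ¬ Set.InjOn (EMT W15 gradW) {X : Mat 2 | X.det ≠ 0} := by
  have main : ∀ X : Mat 2, X.det ≠ 0 →
      EMT W15 gradW X = (2 / |X.det|) • (Xᵀ * X - (Xᵀ * X).trace • (1 : Mat 2)) ∧
      (∀ t : ℝ, t ≠ 0 → EMT W15 gradW (t • X) = EMT W15 gradW X) ∧
      (EMT W15 gradW X).det = 4 := by
    intro X hX
    have h1 : |X.det| ≠ 0 := abs_ne_zero.mpr hX
    have hi := EMT_formula gradW hgrad X hX
    refine ⟨hi, ?_, ?_⟩
    · intro t ht
      have htX : ((t • X : Mat 2)).det ≠ 0 := by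
        rw [det_smul_two]; exact mul_ne_zero (pow_ne_zero 2 ht) hX
      have hii := EMT_formula gradW hgrad (t • X) htX
      rw [hii, hi]
      have habs : |(t • X : Mat 2).det| = t^2 * |X.det| := by
        rw [det_smul_two, abs_mul, abs_of_nonneg (sq_nonneg t)]
      rw [habs]
      ext i j
      fin_cases i <;> fin_cases j <;>
      · simp only [Matrix.smul_apply, Matrix.sub_apply, Matrix.mul_apply,
          Matrix.trace_fin_two, Matrix.one_apply, Matrix.transpose_apply,
          Fin.sum_univ_two, smul_eq_mul]
        field_simp
    · rw [hi]
      have hdet1 : (Xᵀ * X - (Xᵀ * X).trace • (1 : Mat 2)).det = X.det ^ 2 := by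
        simp [Matrix.det_fin_two, Matrix.trace_fin_two, Matrix.sub_apply,
          Matrix.smul_apply, Matrix.one_apply, Matrix.mul_apply,
          Matrix.transpose_apply, Fin.sum_univ_two, smul_eq_mul]
        ring
      rw [det_smul_two, hdet1, div_pow, sq_abs]
      field_simp
      norm_num
  refine ⟨main, ?_⟩
  intro hinj
  have h1 : ((1 : Mat 2)).det ≠ 0 := by simp
  have h2 : (((2:ℝ) • (1 : Mat 2))).det ≠ 0 := by
    rw [det_smul_two]; norm_num
  have heq : EMT W15 gradW ((2:ℝ) • (1 : Mat 2)) = EMT W15 gradW 1 :=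
    (main 1 h1).2.1 2 (by norm_num)
  have := hinj h2 h1 heq
  have h00 := congrFun (congrFun this 0) 0
  simp [Matrix.smul_apply, Matrix.one_apply] at h00
end
end

section
/- Let n ≥ 1, let X ∈ M_n(ℝ) be invertible, and let W(X) = |adj(X)|² = tr(adj(X)ᵀ·adj(X)). Then W is differentiable at X with gradient ∇W(X) = −2·det(X)⁻¹·adj(XᵀXXᵀ) + 2·det(X)⁻¹·|adj(X)|²·adj(X)ᵀ, and moreover Xᵀ·∇W(X) = −2·adj(XᵀX) + 2·|adj(X)|²·I. -/
open MeasureTheory Matrix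

attribute [local instance] Matrix.normedAddCommGroup Matrix.normedSpace

noncomputable section

section Aux
variable {n : ℕ}

lemma hasDerivAt_matrix {f : ℝ → Mat n} {f' : Mat n} {t : ℝ} :
    HasDerivAt f f' t ↔ ∀ i j, HasDerivAt (fun s => f s i j) (f' i j) t := by
  exact (hasDerivAt_pi (φ := f)).trans (forall_congr' fun i => hasDerivAt_pi)

lemma HasDerivAt.matMul {f g : ℝ → Mat n} {f' g' : Mat n} {t : ℝ}
    (hf : HasDerivAt f f' t) (hg : HasDerivAt g g' t) :
    HasDerivAt (fun s => f s * g s) (f' * g t + f t * g') t := by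
  rw [hasDerivAt_matrix] at hf hg ⊢
  intro i j
  have h : HasDerivAt (fun s => ∑ k, f s i k * g s k j)
      (∑ k, (f' i k * g t k j + f t i k * g' k j)) t :=
    HasDerivAt.fun_sum fun k _ => (hf i k).mul (hg k j)
  simpa only [Matrix.mul_apply, Matrix.add_apply, Finset.sum_add_distrib] using h

lemma HasDerivAt.matTranspose {f : ℝ → Mat n} {f' : Mat n} {t : ℝ}
    (hf : HasDerivAt f f' t) :
    HasDerivAt (fun s => (f s)ᵀ) f'ᵀ t := by
  rw [hasDerivAt_matrix] at hf ⊢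
  intro i j
  simpa only [Matrix.transpose_apply] using hf j i

lemma HasDerivAt.matTrace {f : ℝ → Mat n} {f' : Mat n} {t : ℝ}
    (hf : HasDerivAt f f' t) :
    HasDerivAt (fun s => (f s).trace) f'.trace t := by
  rw [hasDerivAt_matrix] at hf
  simpa only [Matrix.trace, Matrix.diag] using HasDerivAt.fun_sum (fun i _ => hf i i)

lemma diff_entry (a b : Fin n) : Differentiable ℝ (fun Y : Mat n => Y a b) :=
  differentiable_pi.mp (differentiable_pi.mp differentiable_id a) b

lemma diff_finset_prod {ι : Type*} {E : Type*} [NormedAddCommGroup E] [NormedSpace ℝ E]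
    (s : Finset ι) (f : ι → E → ℝ) (hf : ∀ i ∈ s, Differentiable ℝ (f i)) :
    Differentiable ℝ (fun Y => ∏ i ∈ s, f i Y) := by
  classical
  revert hf
  induction s using Finset.induction_on with
  | empty => intro _; simpa using differentiable_const (1:ℝ)
  | @insert a s ha ih =>
    intro hf
    simp only [Finset.prod_insert ha]
    exact (hf a (Finset.mem_insert_self a s)).mul
      (ih fun i hi => hf i (Finset.mem_insert_of_mem hi))

lemma diff_adj_entry (i j : Fin n) :
    Differentiable ℝ (fun Y : Mat n => Y.adjugate i j) := by
  have hrw : (fun Y : Mat n => Y.adjugate i j)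
      = fun Y => ∑ σ : Equiv.Perm (Fin n), ((Equiv.Perm.sign σ : ℤ) : ℝ) *
          ∏ k, (Y.updateRow j (Pi.single i 1)) (σ k) k := by
    funext Y
    rw [Matrix.adjugate_apply, Matrix.det_apply]
    simp [Units.smul_def, zsmul_eq_mul]
  rw [hrw]
  apply Differentiable.fun_sum
  intro σ _
  apply Differentiable.const_mul
  apply diff_finset_prod
  intro k _
  simp only [Matrix.updateRow_apply]
  rcases eq_or_ne (σ k) j with h | h
  · simp only [if_pos h]
    exact differentiable_const _
  · simp only [if_neg h]
    exact diff_entry (σ k) k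

lemma diff_W : Differentiable ℝ (fun Y : Mat n => (Y.adjugateᵀ * Y.adjugate).trace) := by
  have hrw : (fun Y : Mat n => (Y.adjugateᵀ * Y.adjugate).trace)
      = fun Y => ∑ i, ∑ k, Y.adjugate k i * Y.adjugate k i := by
    funext Y
    simp [Matrix.trace, Matrix.diag, Matrix.mul_apply]
  rw [hrw]
  exact Differentiable.fun_sum fun i _ =>
    Differentiable.fun_sum fun k _ => (diff_adj_entry k i).mul (diff_adj_entry k i)

end Aux

/-- for `W(X) = |adj X|²` and `X` invertible, `W` is differentiable at `X`
with gradient `∇W(X) = −2 det(X)⁻¹ adj(XᵀXXᵀ) + 2 det(X)⁻¹ |adj X|² adj(X)ᵀ`, and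
`Xᵀ ∇W(X) = −2 adj(XᵀX) + 2 |adj X|² I`. -/
theorem stmt_19 (n : ℕ) (hn : 1 ≤ n) (X : Mat n) (hX : X.det ≠ 0) :
    DifferentiableAt ℝ (fun Y : Mat n => (Y.adjugateᵀ * Y.adjugate).trace) X ∧
    (∀ H : Mat n, HasDerivAt
      (fun t : ℝ => (((X + t • H).adjugate)ᵀ * (X + t • H).adjugate).trace)
      (frob ((-2 * X.det⁻¹) • (Xᵀ * X * Xᵀ).adjugate
        + (2 * X.det⁻¹ * (X.adjugateᵀ * X.adjugate).trace) • X.adjugateᵀ) H) 0) ∧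
    Xᵀ * ((-2 * X.det⁻¹) • (Xᵀ * X * Xᵀ).adjugate
        + (2 * X.det⁻¹ * (X.adjugateᵀ * X.adjugate).trace) • X.adjugateᵀ)
      = (-2 : ℝ) • (Xᵀ * X).adjugate
        + (2 * (X.adjugateᵀ * X.adjugate).trace) • (1 : Mat n) := by
  have hU : IsUnit X.det := isUnit_iff_ne_zero.mpr hX
  have hXinv : X * X⁻¹ = 1 := X.mul_nonsing_inv hU
  have hinv : X⁻¹ = X.det⁻¹ • X.adjugate := by
    rw [X.inv_def, Ring.inverse_eq_inv]
  set A := X.adjugate with hA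
  have hadjT : (Xᵀ * X * Xᵀ).adjugate = Aᵀ * A * Aᵀ := by
    rw [Matrix.adjugate_mul_distrib, Matrix.adjugate_mul_distrib,
      ← Matrix.adjugate_transpose, mul_assoc]
  have h1 : Xᵀ * Aᵀ = X.det • 1 := by
    rw [← Matrix.transpose_mul, Matrix.adjugate_mul, Matrix.transpose_smul,
      Matrix.transpose_one]
  refine ⟨diff_W.differentiableAt, ?_, ?_⟩
  · intro H
    -- the straight line through X in direction H
    have hline : HasDerivAt (fun t : ℝ => X + t • H) H 0 := by
      have := ((hasDerivAt_id' (x := (0:ℝ))).smul_const H).const_add X; rwa [one_smul] at this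
    have h0 : X + (0:ℝ) • H = X := by simp
    -- derivative of the adjugate along the line
    have hadj : ∀ (i j : Fin n), HasDerivAt (fun t : ℝ => (X + t • H).adjugate i j)
        (fderiv ℝ (fun Y : Mat n => Y.adjugate i j) X H) 0 := by
      intro i j
      have hf : HasFDerivAt (fun Y : Mat n => Y.adjugate i j)
          (fderiv ℝ (fun Y : Mat n => Y.adjugate i j) X) (X + (0:ℝ) • H) := by
        rw [h0]; exact ((diff_adj_entry i j) X).hasFDerivAt
      exact HasFDerivAt.comp_hasDerivAt (f := fun t : ℝ => X + t • H)
        (l := fun Y : Mat n => Y.adjugate i j) 0 hf hline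
    set D : Mat n := Matrix.of (fun i j => fderiv ℝ (fun Y : Mat n => Y.adjugate i j) X H)
      with hD
    have hadjD : HasDerivAt (fun t : ℝ => (X + t • H).adjugate) D 0 :=
      hasDerivAt_matrix.mpr fun i j => hadj i j
    -- derivative of the determinant along the line
    set M : Mat n := X⁻¹ * H with hM
    have hXM : X * M = H := by rw [hM, ← mul_assoc, hXinv, one_mul]
    set q : Polynomial ℝ :=
      (Matrix.det (1 + (Polynomial.X : Polynomial ℝ) • M.map Polynomial.C)).divX.divX with hq
    have key : ∀ t : ℝ, (X + t • H).det
        = X.det * (1 + M.trace * t + q.eval t * t ^ 2) := by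
      intro t
      have hfac : X + t • H = X * (1 + t • M) := by
        rw [mul_add, mul_one, Matrix.mul_smul, hXM]
      rw [hfac, Matrix.det_mul, Matrix.det_one_add_smul]
    have hpoly : HasDerivAt (fun t : ℝ => 1 + M.trace * t + q.eval t * t ^ 2) M.trace 0 := by
      have ha : HasDerivAt (fun t : ℝ => 1 + M.trace * t) M.trace 0 := by
        simpa using (HasDerivAt.const_mul M.trace (hasDerivAt_id (0:ℝ))).const_add 1
      have hb : HasDerivAt (fun t : ℝ => q.eval t * t ^ 2) 0 0 := by
        simpa using (q.hasDerivAt 0).fun_mul (hasDerivAt_pow 2 (0:ℝ))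
      simpa using ha.fun_add hb
    have hdet : HasDerivAt (fun t : ℝ => (X + t • H).det) ((A * H).trace) 0 := by
      have h2 := hpoly.const_mul X.det
      have h3 : X.det * M.trace = (A * H).trace := by
        rw [hM, hinv, Matrix.smul_mul, Matrix.trace_smul, smul_eq_mul]
        field_simp
      rw [h3] at h2
      simpa only [← key] using h2
    -- differentiate the identity adj(Y) * Y = det Y • 1 along the line
    have hmulcurve : HasDerivAt (fun t : ℝ => (X + t • H).adjugate * (X + t • H))
        (D * X + A * H) 0 := by
      have := hadjD.matMul hline
      simpa [h0] using this
    have hsm : HasDerivAt (fun t : ℝ => (X + t • H).det • (1 : Mat n))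
        ((A * H).trace • (1 : Mat n)) 0 := hdet.smul_const 1
    have hsm' : HasDerivAt (fun t : ℝ => (X + t • H).adjugate * (X + t • H))
        ((A * H).trace • (1 : Mat n)) 0 := by
      have hfun : (fun t : ℝ => (X + t • H).adjugate * (X + t • H))
          = fun t : ℝ => (X + t • H).det • (1 : Mat n) := by
        funext t; rw [Matrix.adjugate_mul]
      rw [hfun]; exact hsm
    have huniq : D * X + A * H = (A * H).trace • (1 : Mat n) :=
      hmulcurve.unique hsm'
    have hDval : D = X.det⁻¹ • ((A * H).trace • A - A * H * A) := by
      have hDX : D * X = (A * H).trace • (1 : Mat n) - A * H := eq_sub_of_add_eq huniq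
      have hD2 : D = (D * X) * X⁻¹ := by rw [mul_assoc, hXinv, mul_one]
      rw [hD2, hDX, hinv, Matrix.sub_mul, Matrix.smul_mul, one_mul,
        Matrix.mul_smul, smul_sub, smul_comm ((A * H).trace) (X.det⁻¹) A]
    -- derivative of W along the line
    have hW : HasDerivAt
        (fun t : ℝ => (((X + t • H).adjugate)ᵀ * (X + t • H).adjugate).trace)
        ((Dᵀ * A + Aᵀ * D).trace) 0 := by
      have := (hadjD.matTranspose.matMul hadjD).matTrace
      simpa [h0] using this
    -- identify the derivative with the claimed gradient pairing
    have e1 : (Dᵀ * A).trace = (Aᵀ * D).trace := by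
      rw [← Matrix.trace_transpose (Dᵀ * A), Matrix.transpose_mul,
        Matrix.transpose_transpose]
    have e2 : (Aᵀ * (A * H * A)).trace = (A * Aᵀ * A * H).trace := by
      have h := Matrix.trace_mul_comm (Aᵀ * A * H) A
      simp only [mul_assoc] at h ⊢
      exact h
    have lhs_eq : (Dᵀ * A + Aᵀ * D).trace
        = 2 * (X.det⁻¹ * ((A * H).trace * (Aᵀ * A).trace - (A * Aᵀ * A * H).trace)) := by
      rw [Matrix.trace_add, e1, ← two_mul]
      congr 1
      rw [hDval, Matrix.mul_smul, Matrix.trace_smul, smul_eq_mul]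
      congr 1
      rw [Matrix.mul_sub, Matrix.trace_sub, Matrix.mul_smul, Matrix.trace_smul,
        smul_eq_mul, e2]
    have rhs_eq : frob ((-2 * X.det⁻¹) • (Xᵀ * X * Xᵀ).adjugate
        + (2 * X.det⁻¹ * (Aᵀ * A).trace) • Aᵀ) H
        = 2 * (X.det⁻¹ * ((A * H).trace * (Aᵀ * A).trace - (A * Aᵀ * A * H).trace)) := by
      unfold frob
      rw [hadjT]
      simp only [Matrix.transpose_add, Matrix.transpose_smul, Matrix.transpose_mul,
        Matrix.transpose_transpose, Matrix.add_mul, Matrix.smul_mul, Matrix.trace_add,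
        Matrix.trace_smul, smul_eq_mul, mul_assoc]
      ring
    rw [show frob ((-2 * X.det⁻¹) • (Xᵀ * X * Xᵀ).adjugate
        + (2 * X.det⁻¹ * (Aᵀ * A).trace) • Aᵀ) H = (Dᵀ * A + Aᵀ * D).trace from by
      rw [rhs_eq, lhs_eq]]
    exact hW
  · rw [hadjT, Matrix.adjugate_mul_distrib, ← Matrix.adjugate_transpose, mul_add,
      Matrix.mul_smul, Matrix.mul_smul]
    have h2 : Xᵀ * (Aᵀ * A * Aᵀ) = X.det • (A * Aᵀ) := by
      rw [mul_assoc Aᵀ A Aᵀ, ← mul_assoc, h1, Matrix.smul_mul, one_mul]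
    rw [h2, h1, smul_smul, smul_smul]
    have c1 : -2 * X.det⁻¹ * X.det = (-2 : ℝ) := by field_simp
    have c2 : 2 * X.det⁻¹ * (Aᵀ * A).trace * X.det = 2 * (Aᵀ * A).trace := by field_simp
    rw [c1, c2]
end
end
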